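/- Let ψ : [0, ∞) → [0, ∞) be continuous and nondecreasing, G(x) = x + √x, p : [0,∞) → [0,∞) nondecreasing, and suppose ψ(t) ≤ C·G(∫₀ᵗ ψ(s) ds) + C·p(t) for all t ≥ 0, where C > 0. Then with C' = max{2C, 4C²} one has G^{-1}(ψ(t)) ≤ C' ∫₀ᵗ ψ(s) ds + C' G^{-1}(p(t)) for all t ≥ 0. -/

import Mathlib

/-!
Write `G x = x + √x`; on `[0, ∞)` its inverse is `G⁻¹ x = x + 1/2 - √(x + 1/4) = (√(x + 1/4) - 1/2)²`,
which is monotone there. With `I = ∫₀ᵗ ψ` and `q = G⁻¹(p t)`, so that `p t = G q`, the hypothesis reads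
`ψ t ≤ C (G I + G q)`. Since `√I + √q ≤ 2 √(I + q)`, this is at most `2C · G (I + q)`, and
`2C · G y ≤ G (C' y)` because `2C ≤ C'` and `(2C)² ≤ C'`. Applying the monotone `G⁻¹` gives the claim.
-/

noncomputable def G (x : ℝ) : ℝ := x + √x

noncomputable def Ginv (x : ℝ) : ℝ := x + 1 / 2 - √(x + 1 / 4)

lemma half_le_sqrt_add_quarter {x : ℝ} (hx : 0 ≤ x) : 1 / 2 ≤ √(x + 1 / 4) :=
  (Real.le_sqrt (by norm_num) (by linarith)).2 (by linarith)

lemma Ginv_eq_sq {x : ℝ} (hx : -(1 / 4) ≤ x) : Ginv x = (√(x + 1 / 4) - 1 / 2) ^ 2 := by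
  have hsq : √(x + 1 / 4) ^ 2 = x + 1 / 4 := Real.sq_sqrt (by linarith)
  rw [Ginv]
  linear_combination -hsq

lemma Ginv_nonneg {x : ℝ} (hx : 0 ≤ x) : 0 ≤ Ginv x := by
  rw [Ginv_eq_sq (by linarith)]
  positivity

lemma monotoneOn_Ginv : MonotoneOn Ginv (Set.Ici 0) := by
  intro x hx y hy hxy
  rw [Ginv_eq_sq (by linarith [Set.mem_Ici.1 hx]), Ginv_eq_sq (by linarith [Set.mem_Ici.1 hy])]
  have hhalf := half_le_sqrt_add_quarter (Set.mem_Ici.1 hx)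
  gcongr

lemma G_Ginv {x : ℝ} (hx : 0 ≤ x) : G (Ginv x) = x := by
  have hhalf := half_le_sqrt_add_quarter hx
  rw [G, Ginv_eq_sq (by linarith), Real.sqrt_sq (by linarith), ← Ginv_eq_sq (by linarith), Ginv]
  ring

lemma Ginv_G {y : ℝ} (hy : 0 ≤ y) : Ginv (G y) = y := by
  have hsq : √y ^ 2 = y := Real.sq_sqrt hy
  have hroot : √(G y + 1 / 4) = √y + 1 / 2 := by
    rw [Real.sqrt_eq_iff_eq_sq (by unfold G; positivity) (by positivity), G]
    linear_combination -hsq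
  rw [Ginv, hroot, G]
  ring

lemma Ginv_le_of_le_G {x y : ℝ} (hx : 0 ≤ x) (hy : 0 ≤ y) (hxy : x ≤ G y) : Ginv x ≤ y := by
  calc Ginv x ≤ Ginv (G y) := monotoneOn_Ginv hx (le_trans hx hxy) hxy
    _ = y := Ginv_G hy

lemma G_add_G_le {a b : ℝ} (ha : 0 ≤ a) (hb : 0 ≤ b) : G a + G b ≤ 2 * G (a + b) := by
  have hsa : √a ≤ √(a + b) := Real.sqrt_le_sqrt (by linarith)
  have hsb : √b ≤ √(a + b) := Real.sqrt_le_sqrt (by linarith)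
  unfold G
  linarith

lemma mul_G_le_G_mul {c k x : ℝ} (hc : 0 ≤ c) (hck : c ≤ k) (hck2 : c ^ 2 ≤ k) (hx : 0 ≤ x) :
    c * G x ≤ G (k * x) := by
  have hroot : c * √x ≤ √(k * x) := by
    rw [← Real.sqrt_sq hc, ← Real.sqrt_mul (sq_nonneg c)]
    exact Real.sqrt_le_sqrt (mul_le_mul_of_nonneg_right hck2 hx)
  have hlin : c * x ≤ k * x := mul_le_mul_of_nonneg_right hck hx
  unfold G
  linarith

theorem Ginv_integral_inequality_general (C : ℝ) (hC : 0 < C) (ψ p : ℝ → ℝ)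
    (hψ0 : ∀ t, 0 ≤ ψ t)
    (hp0 : ∀ t, 0 ≤ p t)
    (h : ∀ t ≥ (0 : ℝ), ψ t ≤
      C * ((∫ s in (0 : ℝ)..t, ψ s) + Real.sqrt (∫ s in (0 : ℝ)..t, ψ s)) + C * p t) :
    ∀ t ≥ (0 : ℝ),
      ψ t + 1 / 2 - Real.sqrt (ψ t + 1 / 4) ≤
        max (2 * C) (4 * C ^ 2) * (∫ s in (0 : ℝ)..t, ψ s) +
          max (2 * C) (4 * C ^ 2) * (p t + 1 / 2 - Real.sqrt (p t + 1 / 4)) := by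
  intro t ht
  set C' := max (2 * C) (4 * C ^ 2)
  set I := ∫ s in (0 : ℝ)..t, ψ s
  have hI : 0 ≤ I := intervalIntegral.integral_nonneg ht fun s _ ↦ hψ0 s
  have hq : 0 ≤ Ginv (p t) := Ginv_nonneg (hp0 t)
  have hψG : ψ t ≤ G (C' * (I + Ginv (p t))) :=
    calc ψ t ≤ C * (G I + G (Ginv (p t))) := by rw [G_Ginv (hp0 t), mul_add]; exact h t ht
      _ ≤ C * (2 * G (I + Ginv (p t))) := by gcongr; exact G_add_G_le hI hq
      _ = 2 * C * G (I + Ginv (p t)) := by ring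
      _ ≤ G (C' * (I + Ginv (p t))) :=
        mul_G_le_G_mul (by positivity) (le_max_left _ _)
          ((by ring : (2 * C) ^ 2 = 4 * C ^ 2).trans_le (le_max_right _ _)) (by positivity)
  exact (Ginv_le_of_le_G (hψ0 t) (by positivity) hψG).trans_eq (mul_add _ _ _)

/-- If `ψ` is continuous, nondecreasing, nonnegative, `p` nondecreasing
nonnegative, `C > 0` and `ψ(t) ≤ C·G(∫₀ᵗ ψ) + C·p(t)` with `G(x) = x + √x`, then with
`C' = max{2C, 4C²}` one has `G⁻¹(ψ(t)) ≤ C' ∫₀ᵗ ψ + C' G⁻¹(p(t))` for all `t ≥ 0`,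
where `G⁻¹(x) = x + 1/2 − √(x + 1/4)`. -/
theorem Ginv_integral_inequality (C : ℝ) (hC : 0 < C) (ψ p : ℝ → ℝ)
    (hψc : Continuous ψ) (hψm : Monotone ψ) (hψ0 : ∀ t, 0 ≤ ψ t)
    (hpm : Monotone p) (hp0 : ∀ t, 0 ≤ p t)
    (h : ∀ t ≥ (0 : ℝ), ψ t ≤
      C * ((∫ s in (0 : ℝ)..t, ψ s) + Real.sqrt (∫ s in (0 : ℝ)..t, ψ s)) + C * p t) :
    ∀ t ≥ (0 : ℝ),
      ψ t + 1 / 2 - Real.sqrt (ψ t + 1 / 4) ≤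
        max (2 * C) (4 * C ^ 2) * (∫ s in (0 : ℝ)..t, ψ s) +
          max (2 * C) (4 * C ^ 2) * (p t + 1 / 2 - Real.sqrt (p t + 1 / 4)) :=
  Ginv_integral_inequality_general C hC ψ p hψ0 hp0 h
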